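/- arXiv:2309.01173 — 2 statements merged into one kernel-verified Lean document; each statement's English description precedes it below -/
import Mathlib

section
/- Under the hypotheses of the multi-step Jeffreys's law, ln K^I_n + ln K^II_n ≥ Σ_{i=1}^n ρ_H(P_i, Q_i), where ρ_H(P,Q) := Σ_y (√P(y)−√Q(y))² = 2−2H(P,Q). -/
/-!
At step `i` the two capitals are multiplied by `√(PQ)/(H P)` and `√(PQ)/(H Q)`, whose product is
`1 / H²` whatever the outcome. So the sum of the log-capitals is `-2 ∑ log Hᵢ`, and
`-log H ≥ 1 - H` turns each term into `2 - 2Hᵢ`, the squared Hellinger distance `ρ_H(Pᵢ, Qᵢ)`.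
-/

open Finset

section

variable {Y : Type*} [Fintype Y]

noncomputable def bhattacharyya (P Q : Y → ℝ) : ℝ :=
  ∑ y, Real.sqrt (P y * Q y)

theorem bhattacharyya_pos {P Q : Y → ℝ} (hP : ∀ y, 0 < P y) (hQ : ∀ y, 0 < Q y) (y₀ : Y) :
    0 < bhattacharyya P Q :=
  sum_pos (fun y _ => Real.sqrt_pos.2 (mul_pos (hP y) (hQ y))) ⟨y₀, mem_univ y₀⟩

theorem sum_sq_sqrt_sub_sqrt {P Q : Y → ℝ} (hP : ∀ y, 0 ≤ P y) (hQ : ∀ y, 0 ≤ Q y) :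
    ∑ y, (Real.sqrt (P y) - Real.sqrt (Q y)) ^ 2
      = ∑ y, P y + ∑ y, Q y - 2 * bhattacharyya P Q := by
  have hterm : ∀ y, (Real.sqrt (P y) - Real.sqrt (Q y)) ^ 2
      = P y + Q y - 2 * Real.sqrt (P y * Q y) := fun y => by
    rw [sub_sq, Real.sq_sqrt (hP y), Real.sq_sqrt (hQ y), Real.sqrt_mul (hP y)]
    ring
  simp only [hterm, sum_sub_distrib, sum_add_distrib, bhattacharyya, mul_sum]

theorem hellinger_eq_two_sub_two_mul_bhattacharyya {P Q : Y → ℝ}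
    (hP : ∀ y, 0 ≤ P y) (hPsum : ∑ y, P y = 1) (hQ : ∀ y, 0 ≤ Q y) (hQsum : ∑ y, Q y = 1) :
    ∑ y, (Real.sqrt (P y) - Real.sqrt (Q y)) ^ 2 = 2 - 2 * bhattacharyya P Q := by
  rw [sum_sq_sqrt_sub_sqrt hP hQ, hPsum, hQsum]
  ring

theorem log_sqrt_mul_div_add_log_sqrt_mul_div {p q h : ℝ} (hp : 0 < p) (hq : 0 < q)
    (hh : 0 < h) :
    Real.log (Real.sqrt (p * q) / (h * p)) + Real.log (Real.sqrt (p * q) / (h * q))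
      = -2 * Real.log h := by
  have hprod : Real.sqrt (p * q) / (h * p) * (Real.sqrt (p * q) / (h * q)) = (h ^ 2)⁻¹ := by
    rw [div_mul_div_comm, Real.mul_self_sqrt (mul_pos hp hq).le]
    field_simp
  have hpos : 0 < Real.sqrt (p * q) := Real.sqrt_pos.2 (mul_pos hp hq)
  rw [← Real.log_mul (by positivity) (by positivity), hprod, Real.log_inv, Real.log_pow]
  push_cast
  ring

theorem hellinger_le_log_capital_increments {P Q : Y → ℝ}
    (hP : ∀ y, 0 < P y) (hPsum : ∑ y, P y = 1) (hQ : ∀ y, 0 < Q y) (hQsum : ∑ y, Q y = 1)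
    (y : Y) :
    ∑ y', (Real.sqrt (P y') - Real.sqrt (Q y')) ^ 2
      ≤ Real.log (Real.sqrt (P y * Q y) / (bhattacharyya P Q * P y))
        + Real.log (Real.sqrt (P y * Q y) / (bhattacharyya P Q * Q y)) := by
  have hH := bhattacharyya_pos hP hQ y
  rw [hellinger_eq_two_sub_two_mul_bhattacharyya (fun y => (hP y).le) hPsum
      (fun y => (hQ y).le) hQsum, log_sqrt_mul_div_add_log_sqrt_mul_div (hP y) (hQ y) hH]
  linarith [Real.log_le_sub_one_of_pos hH]

end

theorem jeffreys_law_log_bound_general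
    {Y : Type*} [Fintype Y] (n : ℕ)
    (P Q : ℕ → Y → ℝ) (y : ℕ → Y)
    (hP0 : ∀ i y', 0 < P i y') (hPsum : ∀ i, ∑ y', P i y' = 1)
    (hQ0 : ∀ i y', 0 < Q i y') (hQsum : ∀ i, ∑ y', Q i y' = 1) :
    let H := fun i => ∑ y', Real.sqrt (P i y' * Q i y')
    let f := fun i y' => Real.sqrt (P i y' * Q i y') / (H i * P i y')
    let g := fun i y' => Real.sqrt (P i y' * Q i y') / (H i * Q i y')
    Real.log (∏ i ∈ Finset.range n, f i (y i))
      + Real.log (∏ i ∈ Finset.range n, g i (y i))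
    ≥ ∑ i ∈ Finset.range n,
        ∑ y', (Real.sqrt (P i y') - Real.sqrt (Q i y')) ^ 2 := by
  intro H f g
  have hfactor_pos : ∀ i, 0 < f i (y i) ∧ 0 < g i (y i) := fun i => by
    have hH : 0 < H i := bhattacharyya_pos (hP0 i) (hQ0 i) (y i)
    have hpos := Real.sqrt_pos.2 (mul_pos (hP0 i (y i)) (hQ0 i (y i)))
    exact ⟨div_pos hpos (mul_pos hH (hP0 i (y i))), div_pos hpos (mul_pos hH (hQ0 i (y i)))⟩
  rw [Real.log_prod fun i _ => (hfactor_pos i).1.ne',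
    Real.log_prod fun i _ => (hfactor_pos i).2.ne', ← sum_add_distrib]
  exact sum_le_sum fun i _ =>
    hellinger_le_log_capital_increments (hP0 i) (hPsum i) (hQ0 i) (hQsum i) (y i)

theorem jeffreys_law_log_bound
    {Y : Type*} [Fintype Y] [Nonempty Y] (n : ℕ)
    (P Q : ℕ → Y → ℝ) (y : ℕ → Y)
    (hP0 : ∀ i y', 0 < P i y') (hPsum : ∀ i, ∑ y', P i y' = 1)
    (hQ0 : ∀ i y', 0 < Q i y') (hQsum : ∀ i, ∑ y', Q i y' = 1) :
    let H := fun i => ∑ y', Real.sqrt (P i y' * Q i y')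
    let f := fun i y' => Real.sqrt (P i y' * Q i y') / (H i * P i y')
    let g := fun i y' => Real.sqrt (P i y' * Q i y') / (H i * Q i y')
    Real.log (∏ i ∈ Finset.range n, f i (y i))
      + Real.log (∏ i ∈ Finset.range n, g i (y i))
    ≥ ∑ i ∈ Finset.range n,
        ∑ y', (Real.sqrt (P i y') - Real.sqrt (Q i y')) ^ 2 :=
  jeffreys_law_log_bound_general n P Q y hP0 hPsum hQ0 hQsum
end

section
/- Theorem (χ² translation of capital, one step): Let P, Q be probability measures on a finite set Y with P, Q everywhere positive, and let f : Y → [0,∞) satisfy Σ_y f(y)·P(y) = 1. Let χ := Σ_y Q(y)²/P(y). Define g(y) := (1/2)·(Q(y)/P(y))·(1/χ) + (1/2)·(P(y)/Q(y))·f(y). Then g ≥ 0, Σ_y g(y)·Q(y) = 1, and for every y, g(y) ≥ √(f(y)/χ). -/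
open Finset

/-!
The weight `g` is the arithmetic mean of `a = (Q/P)/χ` and `b = (P/Q) f`. Against `Q`, the first
term integrates to `χ/χ = 1` and the second to `∑ f P = 1`, so `∑ g Q = 1`; pointwise, AM–GM gives
`g ≥ √(a b) = √(f/χ)`.
-/

lemma Real.sqrt_mul_le_half_add {a b : ℝ} (ha : 0 ≤ a) (hb : 0 ≤ b) :
    √(a * b) ≤ (a + b) / 2 :=
  Real.sqrt_le_iff.mpr ⟨by positivity, by nlinarith [four_mul_le_sq_add a b]⟩

lemma sqrt_div_le_half_ratio_add_half_ratio {p q φ χ : ℝ} (hp : 0 < p) (hq : 0 < q)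
    (hφ : 0 ≤ φ) (hχ : 0 ≤ χ) :
    √(φ / χ) ≤ 1 / 2 * (q / p) * (1 / χ) + 1 / 2 * (p / q) * φ := by
  have hprod : q / p * (1 / χ) * (p / q * φ) = φ / χ := by
    field_simp [hp.ne', hq.ne']
  calc √(φ / χ) = √(q / p * (1 / χ) * (p / q * φ)) := by rw [hprod]
    _ ≤ (q / p * (1 / χ) + p / q * φ) / 2 := Real.sqrt_mul_le_half_add (by positivity) (by positivity)
    _ = 1 / 2 * (q / p) * (1 / χ) + 1 / 2 * (p / q) * φ := by ring

lemma sum_half_ratio_add_half_ratio_mul {Y : Type*} [Fintype Y] (P Q f : Y → ℝ)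
    (hQ : ∀ y, Q y ≠ 0) (c : ℝ) :
    ∑ y, (1 / 2 * (Q y / P y) * c + 1 / 2 * (P y / Q y) * f y) * Q y
      = 1 / 2 * c * ∑ y, Q y ^ 2 / P y + 1 / 2 * ∑ y, f y * P y := by
  rw [mul_sum, mul_sum, ← sum_add_distrib]
  refine sum_congr rfl fun y _ => ?_
  field_simp [hQ y]

theorem chi_sq_capital_translation_one_step_general
    {Y : Type*} [Fintype Y] [Nonempty Y] (P Q : Y → ℝ) (f : Y → ℝ)
    (hP0 : ∀ y, 0 < P y)
    (hQ0 : ∀ y, 0 < Q y)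
    (hf0 : ∀ y, 0 ≤ f y) (hf1 : ∑ y, f y * P y = 1) :
    let χ := ∑ y, Q y ^ 2 / P y
    let g := fun y => (1 / 2) * (Q y / P y) * (1 / χ)
        + (1 / 2) * (P y / Q y) * f y
    (∀ y, 0 ≤ g y) ∧ (∑ y, g y * Q y = 1)
    ∧ (∀ y, g y ≥ Real.sqrt (f y / χ)) := by
  intro χ g
  have hχ : 0 < χ := sum_pos (fun y _ => div_pos (pow_pos (hQ0 y) 2) (hP0 y)) univ_nonempty
  refine ⟨fun y => ?_, ?_, fun y => ?_⟩
  · have := hP0 y; have := hQ0 y; have := hf0 y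
    positivity
  · rw [sum_half_ratio_add_half_ratio_mul P Q f (fun y => (hQ0 y).ne'), hf1]
    field_simp [hχ.ne']
    ring
  · exact sqrt_div_le_half_ratio_add_half_ratio (hP0 y) (hQ0 y) (hf0 y) hχ.le

theorem chi_sq_capital_translation_one_step
    {Y : Type*} [Fintype Y] [Nonempty Y] (P Q : Y → ℝ) (f : Y → ℝ)
    (hP0 : ∀ y, 0 < P y) (hPsum : ∑ y, P y = 1)
    (hQ0 : ∀ y, 0 < Q y) (hQsum : ∑ y, Q y = 1)
    (hf0 : ∀ y, 0 ≤ f y) (hf1 : ∑ y, f y * P y = 1) :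
    let χ := ∑ y, Q y ^ 2 / P y
    let g := fun y => (1 / 2) * (Q y / P y) * (1 / χ)
        + (1 / 2) * (P y / Q y) * f y
    (∀ y, 0 ≤ g y) ∧ (∑ y, g y * Q y = 1)
    ∧ (∀ y, g y ≥ Real.sqrt (f y / χ)) :=
  chi_sq_capital_translation_one_step_general P Q f hP0 hQ0 hf0 hf1
end
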